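/- arXiv:1701.00026 — 5 statements merged into one kernel-verified Lean document; each statement's English description precedes it below -/
import Mathlib

section
/- Let R be a ring. Every right R-module is an I_0-module if and only if every simple right R-module is almost projective. -/
universe u v w

section Defs

variable (A : Type u) [Ring A]

/-- The radical of a module: the intersection of all maximal submodules
(`⊤` if there are none). -/
def modRad (M : Type w) [AddCommGroup M] [Module A M] : Submodule A M :=
  sInf {P : Submodule A M | IsCoatom P}

/-- The socle of a module: the sum of all simple submodules. -/
def modSocle (M : Type w) [AddCommGroup M] [Module A M] : Submodule A M :=
  sSup {S : Submodule A M | IsAtom S}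

/-- A submodule `N` of `M` is small if `N ⊔ K = ⊤` implies `K = ⊤`. -/
def IsSmallSubmodule {M : Type w} [AddCommGroup M] [Module A M] (N : Submodule A M) : Prop :=
  ∀ K : Submodule A M, N ⊔ K = ⊤ → K = ⊤

/-- `N` is a direct summand of `M`. -/
def IsDirectSummand {M : Type w} [AddCommGroup M] [Module A M] (N : Submodule A M) : Prop :=
  ∃ N' : Submodule A M, IsCompl N N'

/-- `N` is an essential submodule of `M`. -/
def IsEssentialSubmodule {M : Type w} [AddCommGroup M] [Module A M] (N : Submodule A M) : Prop :=
  ∀ K : Submodule A M, K ≠ ⊥ → N ⊓ K ≠ ⊥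

/-- An `I₀`-module: every non-small submodule contains a nonzero direct summand. -/
def IsI0Module (M : Type w) [AddCommGroup M] [Module A M] : Prop :=
  ∀ N : Submodule A M, ¬ IsSmallSubmodule A N →
    ∃ D : Submodule A M, D ≠ ⊥ ∧ D ≤ N ∧ IsDirectSummand A D

/-- A `V`-module: every proper submodule is an intersection of maximal submodules. -/
def IsVModule (M : Type w) [AddCommGroup M] [Module A M] : Prop :=
  ∀ N : Submodule A M, N ≠ ⊤ →
    ∃ S : Set (Submodule A M), (∀ P ∈ S, IsCoatom P) ∧ N = sInf S

/-- A local module: it has a proper submodule containing every proper submodule. -/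
def IsLocalModule (M : Type w) [AddCommGroup M] [Module A M] : Prop :=
  ∃ P : Submodule A M, P ≠ ⊤ ∧ ∀ K : Submodule A M, K ≠ ⊤ → K ≤ P

/-- A module of composition length two: it has a submodule which is simultaneously an atom
and a coatom of its submodule lattice, i.e. a composition series `0 ⋖ S ⋖ M`. -/
def HasLengthTwo (M : Type w) [AddCommGroup M] [Module A M] : Prop :=
  ∃ S : Submodule A M, IsAtom S ∧ IsCoatom S

/-- A uniform module: nonzero, and any two nonzero submodules intersect nontrivially. -/
def IsUniformModule (M : Type w) [AddCommGroup M] [Module A M] : Prop :=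
  Nontrivial M ∧ ∀ K L : Submodule A M, K ≠ ⊥ → L ≠ ⊥ → K ⊓ L ≠ ⊥

/-- A uniserial module: submodules are linearly ordered by inclusion. -/
def IsUniserialModule (M : Type w) [AddCommGroup M] [Module A M] : Prop :=
  ∀ K L : Submodule A M, K ≤ L ∨ L ≤ K

/-- A semiartinian module: every nonzero quotient has a nonzero socle. -/
def IsSemiartinianModule (M : Type w) [AddCommGroup M] [Module A M] : Prop :=
  ∀ N : Submodule A M, N ≠ ⊤ → modSocle A (M ⧸ N) ≠ ⊥

/-- `U` is `M`-injective: homomorphisms from submodules of `M` to `U` extend to `M`. -/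
def RelInjective (M : Type v) (U : Type w) [AddCommGroup M] [Module A M]
    [AddCommGroup U] [Module A U] : Prop :=
  ∀ (K : Submodule A M) (f : K →ₗ[A] U), ∃ g : M →ₗ[A] U, ∀ x : K, g (x : M) = f x

/-- `P` is `M`-projective: homomorphisms from `P` to quotients of `M` lift to `M`. -/
def RelProjective (M : Type v) (P : Type w) [AddCommGroup M] [Module A M]
    [AddCommGroup P] [Module A P] : Prop :=
  ∀ (K : Submodule A M) (f : P →ₗ[A] M ⧸ K), ∃ h : P →ₗ[A] M, ∀ x : P, K.mkQ (h x) = f x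

/-- `M` is almost `N`-projective. -/
def AlmostNProjective (M : Type v) (N : Type w) [AddCommGroup M] [Module A M]
    [AddCommGroup N] [Module A N] : Prop :=
  ∀ (K : Submodule A N) (f : M →ₗ[A] N ⧸ K),
    (∃ h : M →ₗ[A] N, ∀ x : M, K.mkQ (h x) = f x) ∨
    (∃ N' : Submodule A N, N' ≠ ⊥ ∧ IsDirectSummand A N' ∧
      ∃ h' : N' →ₗ[A] M, ∀ x : N', K.mkQ (x : N) = f (h' x))

/-- `M` is almost projective: almost `N`-projective for every module `N`. -/
def IsAlmostProjective (M : Type w) [AddCommGroup M] [Module A M] : Prop :=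
  ∀ (N : Type v) [AddCommGroup N] [Module A N], AlmostNProjective A M N

/-- `M` is almost `N`-injective. -/
def AlmostNInjective (M : Type v) (N : Type w) [AddCommGroup M] [Module A M]
    [AddCommGroup N] [Module A N] : Prop :=
  ∀ (N₀ : Submodule A N) (f : N₀ →ₗ[A] M),
    (∃ g : N →ₗ[A] M, ∀ x : N₀, g (x : N) = f x) ∨
    (∃ π : Module.End A N, IsIdempotentElem π ∧ π ≠ 0 ∧
      ∃ h : M →ₗ[A] LinearMap.range π, ∀ x : N₀, (↑(h (f x)) : N) = π (x : N))

/-- `M` is almost injective: almost `N`-injective for every module `N`. -/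
def IsAlmostInjective (M : Type w) [AddCommGroup M] [Module A M] : Prop :=
  ∀ (N : Type v) [AddCommGroup N] [Module A N], AlmostNInjective A M N

/-- `N` belongs to `σ(M)`: `N` is isomorphic to a submodule of a quotient of a direct sum
of copies of `M`. -/
def InSigma (M : Type v) [AddCommGroup M] [Module A M]
    (N : Type w) [AddCommGroup N] [Module A N] : Prop :=
  ∃ (ι : Type v) (K : Submodule A (ι →₀ M)) (P : Submodule A ((ι →₀ M) ⧸ K)),
    Nonempty (N ≃ₗ[A] P)

/-- `P` is a projective object of the category `σ(M)`. -/
def ProjInSigma (M : Type v) [AddCommGroup M] [Module A M]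
    (P : Type w) [AddCommGroup P] [Module A P] : Prop :=
  InSigma A M P ∧
  ∀ (X Y : Type v) [AddCommGroup X] [Module A X] [AddCommGroup Y] [Module A Y],
    InSigma A M X → InSigma A M Y →
    ∀ (g : X →ₗ[A] Y), Function.Surjective g →
    ∀ f : P →ₗ[A] Y, ∃ h : P →ₗ[A] X, ∀ x : P, g (h x) = f x

/-- `M` is an almost `V`-module: every simple module is almost `N`-injective
for every `N ∈ σ(M)`. -/
def IsAlmostVModule (M : Type v) [AddCommGroup M] [Module A M] : Prop :=
  ∀ (S : Type v) [AddCommGroup S] [Module A S], IsSimpleModule A S →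
    ∀ (N : Type v) [AddCommGroup N] [Module A N], InSigma A M N → AlmostNInjective A S N

end Defs

/-!
(⇒) Let `f : S → Y ⧸ K` be nonzero, hence injective, and let `T ⊇ K` be the preimage of its
image. If `T` is not small, a nonzero summand of `Y` inside `T` factors through `f`. If `T` is
small, use that `Y × S` is an `I₀`-module: the pullback `P` of `f` along `Y → Y ⧸ K` satisfies
`P + (Y × 0) = Y × S`, so it contains a nonzero summand `D`. Either `D ⊆ Y × 0`, which gives a
summand of `Y` inside `K`; or, as `D ⊆ (T × 0) + (0 × S)` with `T × 0` small, `D` is simple,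
hence a complement of `Y × 0` contained in `P`, i.e. the graph of a lift of `f`.

(⇐) Let `N + K₀ = M` with `K₀ ≠ M`, and suppose `N` contains no nonzero summand. For every
proper `L ⊇ K₀` pick `x ∈ N \ L`; a maximal submodule of `Rx` containing `Rx ∩ L` gives a simple
subquotient of `M`, and its almost `M`-projectivity yields `V ≠ 0` in `Rx ⊆ N` with
`V ∩ L = 0`. This gives `U ⊆ N` with `U ∩ K₀ = 0`, and then, for `C ⊇ K₀` maximal with
`C ∩ U = 0`, a nonzero `V` missing `U + C` unless `U ⊕ C = M`; but `C + V` would contradict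
the maximality of `C`.
-/

section Lattice

variable {α : Type*}

theorem IsCompactElement.exists_le_covBy [CompleteLattice α] {k b : α}
    (hk : IsCompactElement k) (hbk : b < k) : ∃ a, b ≤ a ∧ a ⋖ k := by
  obtain h | ⟨⟨a, hak⟩, ha, hba⟩ :=
    (CompleteLattice.Iic_coatomic_of_compact_element hk).eq_top_or_exists_le_coatom ⟨b, hbk.le⟩
  · exact absurd (congrArg Subtype.val h) hbk.ne
  · exact ⟨a, hba, (covBy_iff_coatom_Iic hak).2 ha⟩

theorem IsCompl.isAtom_of_isAtom_sup_eq_top [Lattice α] [BoundedOrder α] [IsModularLattice α]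
    {d e p : α} (hde : IsCompl d e) (hd : d ≠ ⊥) (hp : IsAtom p) (hpe : p ⊔ e = ⊤) :
    IsAtom d := by
  have hpe' : Disjoint p e := hp.not_le_iff_disjoint.1 fun hle => hd <| by
    rw [sup_eq_right.2 hle] at hpe
    simpa [hpe] using hde.disjoint
  refine hde.isAtom_iff_isCoatom.2 (covBy_top_iff.1 ?_)
  rw [← hpe]
  exact covBy_sup_of_inf_covBy_left (hpe'.eq_bot ▸ hp.bot_covBy)

theorem exists_le_isCompl_of_forall_exists_disjoint [CompleteLattice α] [IsModularLattice α]
    [IsCompactlyGenerated α] {a b : α} (hab : Disjoint a b)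
    (h : ∀ c, b ≤ c → c ≠ ⊤ → ∃ d, d ≠ ⊥ ∧ Disjoint d c) : ∃ c, b ≤ c ∧ IsCompl a c := by
  obtain ⟨c, hbc, hc⟩ := zorn_le_nonempty₀ {c | b ≤ c ∧ Disjoint a c}
    (fun s hs hchain x hx => ⟨sSup s, ⟨(hs hx).1.trans (le_sSup hx),
      hchain.directedOn.disjoint_sSup_right.2 fun y hy => (hs hy).2⟩, fun _ => le_sSup⟩)
    b ⟨le_rfl, hab⟩
  refine ⟨c, hbc, hc.prop.2, codisjoint_iff.2 (by_contra fun hac => ?_)⟩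
  obtain ⟨d, hd, hdac⟩ := h (a ⊔ c) (hbc.trans le_sup_right) hac
  have hacd : Disjoint a (c ⊔ d) := hc.prop.2.disjoint_sup_right_of_disjoint_sup_left hdac.symm
  have hdc : d ≤ c := le_sup_right.trans (hc.le_of_ge ⟨hbc.trans le_sup_left, hacd⟩ le_sup_left)
  exact hd (hdac.eq_bot_of_le (hdc.trans le_sup_right))

end Lattice

section Modules

variable {A : Type*} [Ring A] {M : Type*} [AddCommGroup M] [Module A M]
  {Y : Type*} [AddCommGroup Y] [Module A Y] {S : Type*} [AddCommGroup S] [Module A S]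

theorem IsSmallSubmodule.map {N : Submodule A M} (hN : IsSmallSubmodule A N) (φ : M →ₗ[A] Y) :
    IsSmallSubmodule A (N.map φ) := by
  intro W hW
  have hφW : LinearMap.range φ ≤ W := by
    refine LinearMap.range_le_iff_comap.2 (hN _ (eq_top_iff.2 fun y _ => ?_))
    obtain ⟨_, ⟨n, hn, rfl⟩, w, hw, hnw⟩ :=
      Submodule.mem_sup.1 (hW.ge (Submodule.mem_top : φ y ∈ ⊤))
    exact Submodule.mem_sup.2 ⟨n, hn, y - n, by simp [← hnw, hw], by abel⟩
  rw [← hW, eq_comm, sup_eq_right]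
  exact LinearMap.map_le_range.trans hφW

theorem IsDirectSummand.comap_of_le_range {D : Submodule A M} (hD : IsDirectSummand A D)
    {i : Y →ₗ[A] M} (hi : Function.Injective i) (hDi : D ≤ LinearMap.range i) :
    IsDirectSummand A (D.comap i) := by
  obtain ⟨E, hDE⟩ := hD
  refine ⟨E.comap i, ?_, codisjoint_iff.2 (eq_top_iff.2 fun y _ => ?_)⟩
  · rw [disjoint_iff, ← Submodule.comap_inf, hDE.inf_eq_bot, Submodule.comap_bot,
      LinearMap.ker_eq_bot.2 hi]
  · obtain ⟨d, hd, e, he, hde⟩ :=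
      Submodule.mem_sup.1 (hDE.sup_eq_top.ge (Submodule.mem_top : i y ∈ ⊤))
    obtain ⟨y', rfl⟩ := hDi hd
    exact Submodule.mem_sup.2 ⟨y', hd, y - y', by simpa [← hde] using he, by abel⟩

theorem exists_mkQ_eq_comp_of_le_comap_range {K : Submodule A Y} {f : S →ₗ[A] Y ⧸ K}
    (hf : Function.Injective f) {D : Submodule A Y} (hD : D ≤ (LinearMap.range f).comap K.mkQ) :
    ∃ h' : D →ₗ[A] S, ∀ x : D, K.mkQ x = f (h' x) :=
  ⟨(LinearEquiv.ofInjective f hf).symm.toLinearMap ∘ₗ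
      (K.mkQ ∘ₗ D.subtype).codRestrict _ fun x => hD x.2,
    fun x => by simp⟩

def pullbackMkQ (K : Submodule A Y) (f : S →ₗ[A] Y ⧸ K) : Submodule A (Y × S) :=
  LinearMap.ker (K.mkQ ∘ₗ LinearMap.fst A Y S - f ∘ₗ LinearMap.snd A Y S)

variable {K : Submodule A Y} {f : S →ₗ[A] Y ⧸ K}

theorem mem_pullbackMkQ {p : Y × S} : p ∈ pullbackMkQ K f ↔ K.mkQ p.1 = f p.2 := by
  simp [pullbackMkQ, sub_eq_zero]

theorem pullbackMkQ_sup_ker_snd :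
    pullbackMkQ K f ⊔ LinearMap.ker (LinearMap.snd A Y S) = ⊤ := by
  refine eq_top_iff.2 fun ⟨y, s⟩ _ => ?_
  obtain ⟨y', hy'⟩ := K.mkQ_surjective (f s)
  exact Submodule.mem_sup.2 ⟨(y', s), mem_pullbackMkQ.2 hy', (y - y', 0), by simp, by simp⟩

theorem pullbackMkQ_le_map_inl_sup_range_inr :
    pullbackMkQ K f ≤
      ((LinearMap.range f).comap K.mkQ).map (LinearMap.inl A Y S) ⊔
        LinearMap.range (LinearMap.inr A Y S) := fun p hp =>
  Submodule.mem_sup.2 ⟨(p.1, 0), ⟨p.1, ⟨p.2, (mem_pullbackMkQ.1 hp).symm⟩, rfl⟩,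
    (0, p.2), ⟨p.2, rfl⟩, by simp⟩

theorem exists_lift_of_isCompl_ker_snd {D : Submodule A (Y × S)} (hDG : D ≤ pullbackMkQ K f)
    (hD : IsCompl D (LinearMap.ker (LinearMap.snd A Y S))) :
    ∃ h : S →ₗ[A] Y, ∀ x, K.mkQ (h x) = f x := by
  have hbij : Function.Bijective ((LinearMap.snd A Y S).domRestrict D) := by
    constructor
    · rw [← LinearMap.ker_eq_bot, LinearMap.ker_domRestrict,
        ← Submodule.disjoint_iff_comap_eq_bot]
      exact hD.disjoint
    · rw [← LinearMap.range_eq_top, LinearMap.range_domRestrict,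
        ← Submodule.range_snd (R := A) (M := Y) (M₂ := S), LinearMap.range_eq_map,
        ← hD.sup_eq_top, Submodule.map_sup,
        LinearMap.le_ker_iff_map.1 le_rfl, sup_bot_eq]
  let e := LinearEquiv.ofBijective _ hbij
  refine ⟨LinearMap.fst A Y S ∘ₗ D.subtype ∘ₗ e.symm.toLinearMap, fun s => ?_⟩
  have hs : (e.symm s : Y × S).2 = s := e.apply_symm_apply s
  simpa [hs] using mem_pullbackMkQ.1 (hDG (e.symm s).2)

end Modules

section AlmostProjective

variable {A : Type*} [Ring A] {M : Type*} [AddCommGroup M] [Module A M]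
  {Y : Type*} [AddCommGroup Y] [Module A Y] {S : Type*} [AddCommGroup S] [Module A S]

theorem almostNProjective_of_isI0Module [IsSimpleModule A S] (hY : IsI0Module A Y)
    (hYS : IsI0Module A (Y × S)) : AlmostNProjective A S Y := by
  intro K f
  obtain hf | hf := eq_bot_or_eq_top (LinearMap.ker f)
  swap
  · exact Or.inl ⟨0, fun x => by simp [LinearMap.ker_eq_top.1 hf]⟩
  replace hf := LinearMap.ker_eq_bot.1 hf
  by_cases hT : IsSmallSubmodule A ((LinearMap.range f).comap K.mkQ)
  swap
  · obtain ⟨D, hD, hDT, hDsum⟩ := hY _ hT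
    exact Or.inr ⟨D, hD, hDsum, exists_mkQ_eq_comp_of_le_comap_range hf hDT⟩
  have hP : IsCoatom (LinearMap.ker (LinearMap.snd A Y S)) :=
    LinearMap.isCoatom_ker_of_surjective LinearMap.snd_surjective
  obtain ⟨D, hD, hDG, E, hDE⟩ :=
    hYS (pullbackMkQ K f) fun h => hP.ne_top (h _ pullbackMkQ_sup_ker_snd)
  by_cases hDP : D ≤ LinearMap.ker (LinearMap.snd A Y S)
  · rw [LinearMap.ker_snd] at hDP
    refine Or.inr ⟨D.comap (LinearMap.inl A Y S), fun h => hD ?_,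
      IsDirectSummand.comap_of_le_range ⟨E, hDE⟩ LinearMap.inl_injective hDP,
      exists_mkQ_eq_comp_of_le_comap_range hf fun y hy => ⟨0, ?_⟩⟩
    · rw [← Submodule.map_comap_eq_self hDP, h, Submodule.map_bot]
    · simpa using (mem_pullbackMkQ.1 (hDG hy)).symm
  · have hsup : LinearMap.range (LinearMap.inr A Y S) ⊔ E = ⊤ := by
      refine hT.map (LinearMap.inl A Y S) _ (eq_top_iff.2 ?_)
      rw [← sup_assoc, ← hDE.sup_eq_top]
      exact sup_le_sup_right (hDG.trans pullbackMkQ_le_map_inl_sup_range_inr) _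
    have hDatom : IsAtom D := hDE.isAtom_of_isAtom_sup_eq_top hD
      (isSimpleModule_iff_isAtom.1 <|
        .congr (LinearEquiv.ofInjective _ LinearMap.inr_injective).symm) hsup
    exact Or.inl (exists_lift_of_isCompl_ker_snd hDG
      ⟨hDatom.not_le_iff_disjoint.1 hDP, (hP.not_le_iff_codisjoint.1 hDP).symm⟩)

theorem exists_isDirectSummand_or_disjoint_of_almostNProjective {K T : Submodule A M}
    (hKT : K < T) (hproj : AlmostNProjective A (T ⧸ K.comap T.subtype) M) :
    (∃ D, D ≠ ⊥ ∧ D ≤ T ∧ IsDirectSummand A D) ∨ ∃ V, V ≠ ⊥ ∧ V ≤ T ∧ Disjoint V K := by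
  have hker : K.comap T.subtype = LinearMap.ker (K.mkQ ∘ₗ T.subtype) := by
    rw [LinearMap.ker_comp, Submodule.ker_mkQ]
  set f := (K.comap T.subtype).liftQ (K.mkQ ∘ₗ T.subtype) hker.le
  have hf : Function.Injective f :=
    LinearMap.ker_eq_bot.1 (Submodule.ker_liftQ_eq_bot' _ _ hker)
  have hrange : (LinearMap.range f).comap K.mkQ = T := by
    rw [Submodule.range_liftQ, LinearMap.range_comp, Submodule.range_subtype,
      Submodule.comap_map_mkQ, sup_eq_right.2 hKT.le]
  obtain ⟨h, hh⟩ | ⟨D, hD, hDsum, h', hh'⟩ := hproj K f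
  · refine Or.inr ⟨LinearMap.range h, fun hbot => ?_, ?_, ?_⟩
    · obtain ⟨t, htT, htK⟩ := SetLike.exists_of_lt hKT
      have h0 : h (Submodule.Quotient.mk ⟨t, htT⟩) = 0 := by
        simpa [hbot] using LinearMap.mem_range_self h (Submodule.Quotient.mk ⟨t, htT⟩)
      have hft := hh (Submodule.Quotient.mk ⟨t, htT⟩)
      rw [h0, map_zero, eq_comm] at hft
      exact htK ((Submodule.Quotient.mk_eq_zero K).1 hft)
    · rintro _ ⟨s, rfl⟩
      exact hrange.le ⟨s, (hh s).symm⟩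
    · rw [Submodule.disjoint_def]
      rintro _ ⟨s, rfl⟩ hsK
      have hs : s = 0 := hf (by
        rw [← hh, map_zero, Submodule.mkQ_apply, (Submodule.Quotient.mk_eq_zero K).2 hsK])
      rw [hs, map_zero]
  · refine Or.inl ⟨D, hD, fun x hx => hrange.le ?_, hDsum⟩
    exact ⟨h' ⟨x, hx⟩, (hh' ⟨x, hx⟩).symm⟩

theorem exists_isDirectSummand_or_disjoint_of_not_le
    (hproj : ∀ K T : Submodule A M, K ⋖ T → AlmostNProjective A (T ⧸ K.comap T.subtype) M)
    {N L : Submodule A M} (hNL : ¬ N ≤ L) :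
    (∃ D, D ≠ ⊥ ∧ D ≤ N ∧ IsDirectSummand A D) ∨ ∃ V, V ≠ ⊥ ∧ V ≤ N ∧ Disjoint V L := by
  obtain ⟨x, hxN, hxL⟩ := SetLike.not_le_iff_exists.1 hNL
  have hxspan : A ∙ x ≤ N := (Submodule.span_singleton_le_iff_mem _ _).2 hxN
  obtain ⟨K, hK, hKx⟩ := (Submodule.singleton_span_isCompactElement x).exists_le_covBy
    (inf_lt_left.2 fun h => hxL (h (Submodule.mem_span_singleton_self x)) : (A ∙ x) ⊓ L < A ∙ x)
  refine (exists_isDirectSummand_or_disjoint_of_almostNProjective hKx.lt (hproj K _ hKx)).imp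
    (fun ⟨D, hD, hDx, hDsum⟩ => ⟨D, hD, hDx.trans hxspan, hDsum⟩)
    (fun ⟨V, hV, hVx, hVK⟩ => ⟨V, hV, hVx.trans hxspan, ?_⟩)
  rw [disjoint_iff, ← inf_eq_left.2 hVx, inf_assoc]
  exact (hVK.mono_right hK).eq_bot

theorem isI0Module_of_forall_covBy_almostNProjective
    (hproj : ∀ K T : Submodule A M, K ⋖ T → AlmostNProjective A (T ⧸ K.comap T.subtype) M) :
    IsI0Module A M := by
  intro N hN
  by_contra hno
  obtain ⟨K₀, hNK₀, hK₀⟩ : ∃ K₀, N ⊔ K₀ = ⊤ ∧ K₀ ≠ ⊤ := by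
    simpa [IsSmallSubmodule] using hN
  have hdisj : ∀ L, K₀ ≤ L → L ≠ ⊤ → ∃ V, V ≠ ⊥ ∧ V ≤ N ∧ Disjoint V L := fun L hL hLtop =>
    (exists_isDirectSummand_or_disjoint_of_not_le hproj fun hNL =>
      hLtop (top_unique (hNK₀ ▸ sup_le hNL hL))).resolve_left hno
  obtain ⟨U, hU, hUN, hUK₀⟩ := hdisj K₀ le_rfl hK₀
  obtain ⟨C, -, hUC⟩ := exists_le_isCompl_of_forall_exists_disjoint hUK₀ fun L hL hLtop =>
    let ⟨V, hV, _, hVL⟩ := hdisj L hL hLtop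
    ⟨V, hV, hVL⟩
  exact hno ⟨U, hU, hUN, C, hUC⟩

end AlmostProjective

/-- Corollary 1.2: every right `R`-module is an `I₀`-module iff every simple right
`R`-module is almost projective. -/
theorem every_module_I0_iff_every_simple_almostProjective (R : Type u) [Ring R] :
    (∀ (M : Type v) [AddCommGroup M] [Module Rᵐᵒᵖ M], IsI0Module Rᵐᵒᵖ M) ↔
    (∀ (S : Type v) [AddCommGroup S] [Module Rᵐᵒᵖ S],
      IsSimpleModule Rᵐᵒᵖ S → IsAlmostProjective.{u, v, v} Rᵐᵒᵖ S) := by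
  constructor
  · intro hI0 S _ _ _ Y _ _
    exact almostNProjective_of_isI0Module (hI0 Y) (hI0 (Y × S))
  · intro hproj M _ _
    exact isI0Module_of_forall_covBy_almostNProjective fun K T hKT =>
      hproj _ ((covBy_iff_quot_is_simple hKT.le).1 hKT) M
end

section
/- Let R be a ring and M a right R-module. M is not a V-module if and only if there exists a submodule N of M such that the quotient M/N is uniform, the socle Soc(M/N) is a simple module, and M/N ≠ Soc(M/N). -/
universe u v w

/-!
If `N` is not an intersection of maximal submodules, pick `x ∉ N` lying in every maximal
submodule above `N`, and enlarge `N` by Zorn's lemma to a submodule `K` maximal with `x ∉ K`.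
Every nonzero submodule of `M/K` contains `x̄`, so `M/K` is uniform with simple socle `R x̄`;
and `M/K` is not simple, since a maximal `K ⊇ N` would contain `x`.
Conversely, a simple proper socle `S` of a uniform module meets, hence lies in, every maximal
submodule, so `S ⊆ Rad`; but a `V`-module has quotients with zero radical.
-/

open Submodule

section Lattice

variable {α : Type*}

theorem exists_isCoatom_sInf_eq_iff [CompleteLattice α] (a : α) :
    (∃ S : Set α, (∀ b ∈ S, IsCoatom b) ∧ a = sInf S) ↔
      sInf {b | IsCoatom b ∧ a ≤ b} ≤ a := by
  constructor
  · rintro ⟨S, hS, rfl⟩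
    exact sInf_le_sInf fun b hb => ⟨hS b hb, sInf_le hb⟩
  · exact fun h => ⟨_, fun b hb => hb.1, le_antisymm (le_sInf fun b hb => hb.2) h⟩

variable {s : α}

theorem isAtom_of_forall_ne_bot_le [PartialOrder α] [OrderBot α] (hs : s ≠ ⊥)
    (hle : ∀ t, t ≠ ⊥ → s ≤ t) : IsAtom s :=
  ⟨hs, fun t hts => by_contra fun ht => (hle t ht).not_gt hts⟩

theorem sSup_atoms_eq_of_forall_ne_bot_le [CompleteLattice α] (hs : s ≠ ⊥)
    (hle : ∀ t, t ≠ ⊥ → s ≤ t) : sSup {t : α | IsAtom t} = s :=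
  le_antisymm (sSup_le fun t ht => ((ht.le_iff.mp (hle t ht.1)).resolve_left hs).ge)
    (le_sSup (isAtom_of_forall_ne_bot_le hs hle))

end Lattice

variable {A : Type*} [Ring A] {M : Type*} [AddCommGroup M] [Module A M]

section Radical

theorem isCoatom_comap_mkQ_iff {N : Submodule A M} {Q : Submodule A (M ⧸ N)} :
    IsCoatom (Q.comap N.mkQ) ↔ IsCoatom Q := by
  rw [← (comapMkQRelIso N).isCoatom_iff]
  exact ⟨fun h => h.Ici _, IsCoatom.of_isCoatom_coe_Ici⟩

theorem comap_mkQ_modRad (N : Submodule A M) :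
    (modRad A (M ⧸ N)).comap N.mkQ = sInf {P | IsCoatom P ∧ N ≤ P} := by
  ext x
  simp only [modRad, mem_comap, mem_sInf, Set.mem_ofPred_eq]
  constructor
  · rintro h P ⟨hP, hNP⟩
    have hcomap : (P.map N.mkQ).comap N.mkQ = P := by rw [comap_map_mkQ, sup_eq_right.mpr hNP]
    rw [← hcomap] at hP ⊢
    exact h _ (isCoatom_comap_mkQ_iff.mp hP)
  · exact fun h Q hQ => h _ ⟨isCoatom_comap_mkQ_iff.mpr hQ, le_comap_mkQ N Q⟩

theorem isCoatom_of_isAtom_top_quotient {K : Submodule A M}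
    (h : IsAtom (⊤ : Submodule A (M ⧸ K))) : IsCoatom K :=
  isSimpleModule_iff_isCoatom.mp ((isSimpleModule_iff ..).mpr (isSimpleOrder_iff_isAtom_top.mpr h))

theorem modRad_quotient_eq_bot_iff (N : Submodule A M) :
    modRad A (M ⧸ N) = ⊥ ↔ sInf {P | IsCoatom P ∧ N ≤ P} ≤ N := by
  rw [← le_bot_iff, ← comap_le_comap_iff_of_surjective N.mkQ_surjective, comap_bot, ker_mkQ,
    comap_mkQ_modRad]

theorem IsVModule.modRad_quotient_eq_bot (hV : IsVModule A M) (N : Submodule A M) :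
    modRad A (M ⧸ N) = ⊥ := by
  rw [modRad_quotient_eq_bot_iff]
  rcases eq_or_ne N ⊤ with rfl | hN
  · exact le_top
  · exact (exists_isCoatom_sInf_eq_iff N).mp (hV N hN)

end Radical

section Socle

variable {Q : Type*} [AddCommGroup Q] [Module A Q]

theorem modSocle_le_modRad (hU : IsUniformModule A Q) (hS : IsAtom (modSocle A Q))
    (hne : modSocle A Q ≠ ⊤) : modSocle A Q ≤ modRad A Q := by
  refine le_sInf fun P hP => ?_
  have hP0 : P ≠ ⊥ := by
    rintro rfl
    exact hne (hP.2 _ hS.bot_lt)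
  have hmeet : modSocle A Q ⊓ P ≠ ⊥ := hU.2 _ _ hS.1 hP0
  exact inf_eq_left.mp ((hS.le_iff.mp inf_le_left).resolve_left hmeet)

variable {S : Submodule A Q} (hS : S ≠ ⊥) (hle : ∀ T : Submodule A Q, T ≠ ⊥ → S ≤ T)
include hS hle

theorem isUniformModule_of_forall_ne_bot_le : IsUniformModule A Q := by
  obtain ⟨x, -, hx⟩ := exists_mem_ne_zero_of_ne_bot hS
  exact ⟨nontrivial_of_ne x 0 hx,
    fun T L hT hL h => hS (le_bot_iff.mp (h ▸ le_inf (hle T hT) (hle L hL)))⟩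

theorem modSocle_eq_of_forall_ne_bot_le : modSocle A Q = S :=
  sSup_atoms_eq_of_forall_ne_bot_le hS hle

end Socle

section MaximalNotMem

theorem Submodule.exists_le_maximal_notMem {x : M} {N : Submodule A M} (hx : x ∉ N) :
    ∃ K, N ≤ K ∧ Maximal (x ∉ ·) K := by
  refine zorn_le_nonempty₀ {K | x ∉ K} (fun c hc hchain y hy => ?_) N hx
  refine ⟨sSup c, fun hxc => ?_, fun K hK => le_sSup hK⟩
  obtain ⟨K, hKc, hxK⟩ := (mem_sSup_of_directed ⟨y, hy⟩ hchain.directedOn).mp hxc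
  exact hc hKc hxK

variable {x : M} {K : Submodule A M} (hK : Maximal (x ∉ ·) K)
include hK

theorem mkQ_mem_of_maximal_notMem {T : Submodule A (M ⧸ K)} (hT : T ≠ ⊥) : K.mkQ x ∈ T := by
  by_contra hx
  have hTK : T.comap K.mkQ ≤ (⊥ : Submodule A (M ⧸ K)).comap K.mkQ := by
    rw [comap_bot, ker_mkQ]
    exact hK.2 hx (le_comap_mkQ K T)
  exact hT (le_bot_iff.mp ((comap_le_comap_iff_of_surjective K.mkQ_surjective).mp hTK))

theorem span_mkQ_ne_bot_of_maximal_notMem : span A {K.mkQ x} ≠ ⊥ := by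
  rw [Ne, span_singleton_eq_bot, mkQ_apply, Quotient.mk_eq_zero]
  exact hK.1

theorem span_mkQ_le_of_maximal_notMem {T : Submodule A (M ⧸ K)} (hT : T ≠ ⊥) :
    span A {K.mkQ x} ≤ T :=
  (span_singleton_le_iff_mem _ _).mpr (mkQ_mem_of_maximal_notMem hK hT)

theorem isAtom_span_mkQ_of_maximal_notMem : IsAtom (span A {K.mkQ x}) :=
  isAtom_of_forall_ne_bot_le (span_mkQ_ne_bot_of_maximal_notMem hK)
    fun _ => span_mkQ_le_of_maximal_notMem hK

theorem modSocle_quotient_eq_span_of_maximal_notMem :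
    modSocle A (M ⧸ K) = span A {K.mkQ x} :=
  modSocle_eq_of_forall_ne_bot_le (span_mkQ_ne_bot_of_maximal_notMem hK)
    fun _ => span_mkQ_le_of_maximal_notMem hK

theorem isUniformModule_quotient_of_maximal_notMem : IsUniformModule A (M ⧸ K) :=
  isUniformModule_of_forall_ne_bot_le (span_mkQ_ne_bot_of_maximal_notMem hK)
    fun _ => span_mkQ_le_of_maximal_notMem hK

end MaximalNotMem

/-- Lemma 2.1: `M` is not a `V`-module iff there is a submodule `N ≤ M` such that `M/N` is
uniform, `Soc(M/N)` is simple, and `M/N ≠ Soc(M/N)`. -/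
theorem not_VModule_iff (R : Type u) [Ring R] (M : Type v) [AddCommGroup M]
    [Module Rᵐᵒᵖ M] :
    ¬ IsVModule Rᵐᵒᵖ M ↔
      ∃ N : Submodule Rᵐᵒᵖ M, IsUniformModule Rᵐᵒᵖ (M ⧸ N) ∧
        IsSimpleModule Rᵐᵒᵖ ↥(modSocle Rᵐᵒᵖ (M ⧸ N)) ∧
        modSocle Rᵐᵒᵖ (M ⧸ N) ≠ ⊤ := by
  constructor
  · intro hV
    obtain ⟨N, -, hN⟩ :
        ∃ N : Submodule Rᵐᵒᵖ M, N ≠ ⊤ ∧ ¬ sInf {P | IsCoatom P ∧ N ≤ P} ≤ N := by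
      simpa [IsVModule, exists_isCoatom_sInf_eq_iff] using hV
    obtain ⟨x, hxP, hxN⟩ := SetLike.not_le_iff_exists.mp hN
    obtain ⟨K, hNK, hK⟩ := exists_le_maximal_notMem hxN
    have hsoc := modSocle_quotient_eq_span_of_maximal_notMem hK
    refine ⟨K, isUniformModule_quotient_of_maximal_notMem hK,
      by rw [hsoc, isSimpleModule_iff_isAtom]; exact isAtom_span_mkQ_of_maximal_notMem hK,
      fun htop => hK.1 ?_⟩
    have hKmax : IsCoatom K :=
      isCoatom_of_isAtom_top_quotient (htop ▸ hsoc ▸ isAtom_span_mkQ_of_maximal_notMem hK)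
    exact mem_sInf.mp hxP K ⟨hKmax, hNK⟩
  · rintro ⟨N, hU, hS, hne⟩ hV
    have hS := isSimpleModule_iff_isAtom.mp hS
    have hrad := modSocle_le_modRad hU hS hne
    rw [hV.modRad_quotient_eq_bot N, le_bot_iff] at hrad
    exact hS.1 hrad
end

section
/- Let R be a ring and M an almost V-module. Then for every module N ∈ σ(M), the Jacobson radical J(N) is a semisimple module. -/
universe u v w

/-!
If `Rad N` were not semisimple, some essential submodule `E` of `N` would miss an element `x` of
`Rad N`. Enlarge `E` to a submodule `L` maximal with `x ∉ L`; then `L` is still essential and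
`S = (Rx + L)/L` is simple. Almost `N`-injectivity of `S` applied to the projection `Rx + L → S`
either extends it to `N → S`, whose kernel is a maximal submodule missing `x ∈ Rad N`, or yields
a nonzero idempotent `π` of `N` killing `L`, whose image then meets the essential `L` trivially.
-/

section Lattice

variable {α : Type*} [CompleteLattice α]

theorem exists_maximal_disjoint [IsCompactlyGenerated α] (a : α) :
    ∃ c, Maximal (Disjoint a) c :=
  zorn_le₀ {c | Disjoint a c} fun _ hs hchain =>
    ⟨_, hchain.directedOn.disjoint_sSup_right.2 fun _ hb => hs hb, fun _ => le_sSup⟩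

theorem IsCompactElement.exists_le_maximal_not_le {k b : α} (hk : IsCompactElement k)
    (hkb : ¬ k ≤ b) : ∃ m, b ≤ m ∧ Maximal (fun m => ¬ k ≤ m) m := by
  refine zorn_le_nonempty₀ {m | ¬ k ≤ m} (fun s hs hchain y hy => ?_) b hkb
  refine ⟨sSup s, fun hks => ?_, fun _ => le_sSup⟩
  obtain ⟨m, hm, hkm⟩ := (CompleteLattice.isCompactElement_iff_le_of_directed_sSup_le α k).1 hk
    s ⟨y, hy⟩ hchain.directedOn hks
  exact hs hm hkm

theorem Maximal.covBy_sup_of_not_le {k m : α} (hm : Maximal (fun m => ¬ k ≤ m) m) :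
    m ⋖ k ⊔ m := by
  refine ⟨right_lt_sup.2 hm.1, fun c hmc hck => hck.not_ge (sup_le ?_ hmc.le)⟩
  by_contra hkc
  exact hmc.ne (hm.eq_of_le hkc hmc.le)

end Lattice

section Module

open Submodule

variable {R : Type*} [Ring R] {N : Type w} [AddCommGroup N] [Module R N]

theorem isEssentialSubmodule_sup_of_maximal_disjoint {K C : Submodule R N}
    (hC : Maximal (Disjoint K) C) : IsEssentialSubmodule R (K ⊔ C) := by
  intro D hD hKCD
  have hDC : D ≤ C :=
    le_sup_right.trans (hC.2 (hC.1.disjoint_sup_right_of_disjoint_sup_left (disjoint_iff.2 hKCD))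
      le_sup_left)
  exact hD (eq_bot_iff.2 (hKCD ▸ le_inf (hDC.trans le_sup_right) le_rfl))

theorem exists_isEssentialSubmodule_not_le {Y : Submodule R N}
    (hY : ¬ IsSemisimpleModule R Y) :
    ∃ E : Submodule R N, IsEssentialSubmodule R E ∧ ¬ Y ≤ E := by
  rw [isSemisimpleModule_iff, Y.mapIic.complementedLattice_iff,
    Set.Iic.complementedLattice_iff] at hY
  push Not at hY
  obtain ⟨K, hKY, hK⟩ := hY
  obtain ⟨C, hC⟩ := exists_maximal_disjoint K
  refine ⟨K ⊔ C, isEssentialSubmodule_sup_of_maximal_disjoint hC, fun hYKC => ?_⟩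
  -- by modularity, `C ⊓ Y` would be a complement of `K` in `Y`
  refine hK (C ⊓ Y) inf_le_right (disjoint_iff.1 (hC.1.mono_right inf_le_left)) ?_
  rw [← sup_inf_assoc_of_le C hKY, inf_eq_right.2 hYKC]

theorem AlmostNInjective.exists_isCoatom_inf_le_or_exists_disjoint {A B : Submodule R N}
    (hAB : A ⋖ B) (h : AlmostNInjective R (B ⧸ A.comap B.subtype) N) :
    (∃ P : Submodule R N, IsCoatom P ∧ B ⊓ P ≤ A) ∨
      ∃ D : Submodule R N, D ≠ ⊥ ∧ Disjoint D A := by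
  have := (covBy_iff_quot_is_simple hAB.le).1 hAB
  rcases h B (A.comap B.subtype).mkQ with ⟨g, hg⟩ | ⟨π, hπ, hπ0, φ, hπB⟩
  · refine .inl ⟨LinearMap.ker g, LinearMap.isCoatom_ker_of_surjective fun s => ?_, ?_⟩
    · obtain ⟨y, rfl⟩ := mkQ_surjective _ s
      exact ⟨y, hg y⟩
    · rintro y ⟨hyB, hy⟩
      have : (A.comap B.subtype).mkQ ⟨y, hyB⟩ = 0 := (hg ⟨y, hyB⟩).symm.trans hy
      simpa using this
  · refine .inr ⟨LinearMap.range π, fun hπ' => hπ0 (LinearMap.range_eq_bot.1 hπ'), ?_⟩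
    rw [disjoint_def]
    rintro _ ⟨w, rfl⟩ hwA
    have hmk : (A.comap B.subtype).mkQ ⟨π w, hAB.le hwA⟩ = 0 :=
      (Submodule.Quotient.mk_eq_zero _).2 hwA
    have hπw := hπB ⟨π w, hAB.le hwA⟩
    rw [hmk, map_zero, ZeroMemClass.coe_zero] at hπw
    rwa [← Module.End.mul_apply, hπ.eq, eq_comm] at hπw

theorem isSemisimpleModule_modRad_of_forall_almostNInjective
    (h : ∀ (S : Type w) [AddCommGroup S] [Module R S], IsSimpleModule R S →
      AlmostNInjective R S N) :
    IsSemisimpleModule R (modRad R N) := by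
  by_contra hns
  obtain ⟨E, hE, hradE⟩ := exists_isEssentialSubmodule_not_le hns
  obtain ⟨x, hx, hxE⟩ := Set.not_subset.1 hradE
  obtain ⟨L, hEL, hL⟩ := (singleton_span_isCompactElement (R := R) x).exists_le_maximal_not_le
    (by rwa [span_singleton_le_iff_mem])
  have hcov : L ⋖ span R {x} ⊔ L := hL.covBy_sup_of_not_le
  have hS := h _ ((covBy_iff_quot_is_simple hcov.le).1 hcov)
  rcases hS.exists_isCoatom_inf_le_or_exists_disjoint hcov with ⟨P, hP, hPL⟩ | ⟨D, hD, hDL⟩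
  · have hxP : x ∈ (span R {x} ⊔ L) ⊓ P :=
      ⟨mem_sup_left (mem_span_singleton_self x), mem_sInf.1 hx P hP⟩
    exact hL.1 ((span_singleton_le_iff_mem _ _).2 (hPL hxP))
  · exact hE D hD (eq_bot_iff.2 (hDL.symm.eq_bot ▸ inf_le_inf_right D hEL))

end Module

/-- Proposition 2.2 (1): if `M` is an almost `V`-module then the Jacobson radical of every
module in `σ(M)` is semisimple. -/
theorem almostVModule_rad_semisimple (R : Type u) [Ring R] (M : Type v) [AddCommGroup M]
    [Module Rᵐᵒᵖ M] (hM : IsAlmostVModule Rᵐᵒᵖ M) :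
    ∀ (N : Type v) [AddCommGroup N] [Module Rᵐᵒᵖ N], InSigma Rᵐᵒᵖ M N →
      IsSemisimpleModule Rᵐᵒᵖ ↥(modRad Rᵐᵒᵖ N) :=
  fun N _ _ hN => isSemisimpleModule_modRad_of_forall_almostNInjective fun S _ _ hS => hM S hS N hN
end

section
/- Let R be a ring and M an almost V-module. Then for every module N ∈ σ(M), the quotient N/J(N) by its Jacobson radical is a V-module. -/
universe u v w

section Aux
variable {A : Type u} [Ring A]

/-- comap of a coatom is `⊤` or a coatom. -/
lemma isCoatom_comap {X : Type*} {Y : Type*} [AddCommGroup X] [Module A X]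
    [AddCommGroup Y] [Module A Y] (φ : X →ₗ[A] Y) {P : Submodule A Y}
    (hP : IsCoatom P) (hne : P.comap φ ≠ ⊤) : IsCoatom (P.comap φ) := by
  refine ⟨hne, fun T hT => ?_⟩
  obtain ⟨t, htT, htP⟩ := SetLike.not_le_iff_exists.mp hT.not_ge
  have hsup : P ⊔ Submodule.span A {φ t} = ⊤ :=
    hP.2 _ (lt_of_le_of_ne le_sup_left (fun h => htP (by
      have : φ t ∈ P ⊔ Submodule.span A {φ t} :=
        Submodule.mem_sup_right (Submodule.mem_span_singleton_self _)
      rw [← h] at this; exact this)))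
  rw [eq_top_iff]
  intro u _
  have hu : φ u ∈ P ⊔ Submodule.span A {φ t} := hsup ▸ Submodule.mem_top
  obtain ⟨p, hp, q, hq, hpq⟩ := Submodule.mem_sup.mp hu
  obtain ⟨a, rfl⟩ := Submodule.mem_span_singleton.mp hq
  have : u - a • t ∈ P.comap φ := by
    simp only [Submodule.mem_comap, map_sub, map_smul, ← hpq]
    simpa using hp
  have := hT.le this
  have := T.add_mem this (T.smul_mem a htT)
  simpa using this

/-- any linear map sends the radical into the radical. -/
lemma map_modRad_le {X : Type*} {Y : Type*} [AddCommGroup X] [Module A X]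
    [AddCommGroup Y] [Module A Y] (φ : X →ₗ[A] Y) :
    (modRad A X).map φ ≤ modRad A Y := by
  refine le_sInf fun P hP => ?_
  rw [Submodule.map_le_iff_le_comap]
  by_cases hne : P.comap φ = ⊤
  · rw [hne]; exact le_top
  · exact sInf_le (isCoatom_comap φ hP hne)

/-- the radical of `N ⧸ rad N` is trivial. -/
lemma modRad_quot_modRad (N : Type w) [AddCommGroup N] [Module A N] :
    modRad A (N ⧸ modRad A N) = ⊥ := by
  rw [eq_bot_iff]
  intro z hz
  obtain ⟨n, rfl⟩ := (modRad A N).mkQ_surjective z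
  have hn : n ∈ modRad A N := by
    refine Submodule.mem_sInf.mpr fun P hP => ?_
    have hradP : modRad A N ≤ P := sInf_le hP
    have hcomap : ((P.map (modRad A N).mkQ).comap (modRad A N).mkQ) = P := by
      rw [Submodule.comap_map_mkQ, sup_eq_right.mpr hradP]
    have hPne : P.map (modRad A N).mkQ ≠ ⊤ := fun h => by
      rw [h, Submodule.comap_top] at hcomap; exact hP.1 hcomap.symm
    have hPco : IsCoatom (P.map (modRad A N).mkQ) := by
      refine ⟨hPne, fun T hT => ?_⟩
      have h1 : P ≤ T.comap (modRad A N).mkQ := by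
        rw [← hcomap]; exact Submodule.comap_mono hT.le
      have h2 : P ≠ T.comap (modRad A N).mkQ := fun h => by
        have := Submodule.map_comap_eq_of_surjective (modRad A N).mkQ_surjective T
        rw [← h] at this; exact hT.ne this
      have := hP.2 _ (lt_of_le_of_ne h1 h2)
      rw [eq_top_iff, ← Submodule.map_comap_eq_of_surjective (modRad A N).mkQ_surjective T,
        this]
      exact le_of_eq (by rw [Submodule.map_top, Submodule.range_mkQ])
    have hzmem : (modRad A N).mkQ n ∈ P.map (modRad A N).mkQ :=
      Submodule.mem_sInf.mp hz _ hPco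
    obtain ⟨p, hp, hpn⟩ := hzmem
    have : p - n ∈ modRad A N := (Submodule.Quotient.eq _).mp hpn
    have : p - n ∈ P := hradP this
    simpa using P.sub_mem hp this
  simpa [Submodule.Quotient.mk_eq_zero] using hn

/-- σ(M) is closed under quotients. -/
lemma inSigma_quot {M : Type v} [AddCommGroup M] [Module A M] {N : Type v}
    [AddCommGroup N] [Module A N] (h : InSigma A M N) (U : Submodule A N) :
    InSigma A M (N ⧸ U) := by
  obtain ⟨ι, K, P, ⟨e⟩⟩ := h
  set W := ι →₀ M
  set Pt : Submodule A W := P.comap K.mkQ with hPt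
  have hmap : Pt.map K.mkQ = P := Submodule.map_comap_eq_of_surjective K.mkQ_surjective P
  let ρ₁ : Pt →ₗ[A] P :=
    (K.mkQ.comp Pt.subtype).codRestrict P (fun y => y.2)
  have hρ₁ : Function.Surjective ρ₁ := by
    rintro ⟨p, hp⟩
    rw [← hmap] at hp
    obtain ⟨w, hw, hwp⟩ := hp
    exact ⟨⟨w, hw⟩, Subtype.ext hwp⟩
  let χ : Pt →ₗ[A] N ⧸ U := U.mkQ ∘ₗ (e.symm : P →ₗ[A] N) ∘ₗ ρ₁
  have hχ : Function.Surjective χ := by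
    intro z
    obtain ⟨n, rfl⟩ := U.mkQ_surjective z
    obtain ⟨y, hy⟩ := hρ₁ (e n)
    refine ⟨y, ?_⟩
    simp only [χ, LinearMap.comp_apply, LinearEquiv.coe_coe, hy, LinearEquiv.symm_apply_apply]
  let U₀ : Submodule A W := (LinearMap.ker χ).map Pt.subtype
  let ρ : Pt →ₗ[A] W ⧸ U₀ := U₀.mkQ ∘ₗ Pt.subtype
  have hker : LinearMap.ker ρ = LinearMap.ker χ := by
    ext y
    simp only [LinearMap.mem_ker, ρ, LinearMap.comp_apply, Submodule.mkQ_apply]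
    rw [Submodule.Quotient.mk_eq_zero]
    constructor
    · rintro ⟨z, hz, hzy⟩
      have : z = y := Subtype.ext hzy
      rwa [← this]
    · intro hy
      exact ⟨y, hy, rfl⟩
  refine ⟨ι, U₀, LinearMap.range ρ, ⟨?_⟩⟩
  exact ((χ.quotKerEquivOfSurjective hχ).symm.trans
    (Submodule.quotEquivOfEq _ _ hker.symm)).trans ρ.quotKerEquivRange

end Aux

/-- Proposition 2.2 (2): if `M` is an almost `V`-module then `N/J(N)` is a `V`-module for
every `N ∈ σ(M)`. -/
theorem almostVModule_quotient_rad_VModule (R : Type u) [Ring R] (M : Type v)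
    [AddCommGroup M] [Module Rᵐᵒᵖ M] (hM : IsAlmostVModule Rᵐᵒᵖ M) :
    ∀ (N : Type v) [AddCommGroup N] [Module Rᵐᵒᵖ N], InSigma Rᵐᵒᵖ M N →
      IsVModule Rᵐᵒᵖ (N ⧸ modRad Rᵐᵒᵖ N) := by

  intro N _ _ hN K _
  refine ⟨{P | IsCoatom P ∧ K ≤ P}, fun P hP => hP.1, ?_⟩
  refine le_antisymm (le_sInf fun P hP => hP.2) ?_
  by_contra hcon
  obtain ⟨x, hxS, hxK⟩ := SetLike.not_le_iff_exists.mp hcon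
  -- Zorn: maximal L ⊇ K with x ∉ L
  obtain ⟨L, hKL', hLmax⟩ := zorn_le_nonempty₀
      {T : Submodule Rᵐᵒᵖ (N ⧸ modRad Rᵐᵒᵖ N) | K ≤ T ∧ x ∉ T}
      (fun c hc hchain y hy => by
        refine ⟨sSup c, ⟨le_trans (hc hy).1 (le_sSup hy), fun hxc => ?_⟩,
          fun z hz => le_sSup hz⟩
        obtain ⟨T, hT, hxT⟩ := (Submodule.mem_sSup_of_directed ⟨y, hy⟩
          (hchain.directedOn)).mp hxc
        exact (hc hT).2 hxT) K ⟨le_rfl, hxK⟩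
  obtain ⟨⟨hKL, hxL⟩, hLmax⟩ := hLmax
  -- every nonzero submodule of Q/L contains c := mk x
  set c : (N ⧸ modRad Rᵐᵒᵖ N) ⧸ L := L.mkQ x with hcdef
  have hkey : ∀ U : Submodule Rᵐᵒᵖ ((N ⧸ modRad Rᵐᵒᵖ N) ⧸ L), U ≠ ⊥ → c ∈ U := by
    intro U hU
    set T := U.comap L.mkQ with hTdef
    have hLT : L ≤ T := fun y hy => by
      have : L.mkQ y = 0 := by simpa [Submodule.Quotient.mk_eq_zero] using hy
      simp only [hTdef, Submodule.mem_comap, this]; exact U.zero_mem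
    by_cases hxT : x ∈ T
    · exact hxT
    · have hTS : K ≤ T ∧ x ∉ T := ⟨hKL.trans hLT, hxT⟩
      have hTL : T = L := le_antisymm (hLmax hTS hLT) hLT
      exfalso
      apply hU
      have := Submodule.map_comap_eq_of_surjective L.mkQ_surjective U
      rw [← hTdef] at this
      rw [← this, hTL, eq_bot_iff]
      rintro z ⟨y, hy, rfl⟩
      simpa [Submodule.Quotient.mk_eq_zero] using hy
  have hc0 : c ≠ 0 := by
    simpa [hcdef, Submodule.Quotient.mk_eq_zero] using hxL
  set C : Submodule Rᵐᵒᵖ ((N ⧸ modRad Rᵐᵒᵖ N) ⧸ L) := Submodule.span Rᵐᵒᵖ {c} with hCdef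
  have hcC : c ∈ C := Submodule.mem_span_singleton_self c
  have hCatom : IsAtom C := by
    constructor
    · simpa [hCdef, Submodule.span_singleton_eq_bot] using hc0
    · intro U hU
      by_contra hU0
      exact hU.not_ge (by
        rw [hCdef, Submodule.span_le, Set.singleton_subset_iff]
        exact hkey U hU0)
  haveI hCsimple : IsSimpleModule Rᵐᵒᵖ C := isSimpleModule_iff_isAtom.mpr hCatom
  set L₁ : Submodule Rᵐᵒᵖ (N ⧸ modRad Rᵐᵒᵖ N) := L ⊔ Submodule.span Rᵐᵒᵖ {x} with hL₁def
  have hmapL₁ : L₁.map L.mkQ = C := by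
    rw [hL₁def, Submodule.map_sup, Submodule.map_span, Set.image_singleton]
    have : L.map L.mkQ = ⊥ := by
      rw [eq_bot_iff]; rintro z ⟨y, hy, rfl⟩
      simpa [Submodule.Quotient.mk_eq_zero] using hy
    rw [this, bot_sup_eq, hCdef]
  have hmemC : ∀ y : L₁, L.mkQ (y : N ⧸ modRad Rᵐᵒᵖ N) ∈ C :=
    fun y => hmapL₁ ▸ Submodule.mem_map_of_mem y.2
  set f : L₁ →ₗ[Rᵐᵒᵖ] C :=
    (L.mkQ.comp L₁.subtype).codRestrict C (fun y => hmemC y) with hfdef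
  have hxL₁ : x ∈ L₁ := Submodule.mem_sup_right (Submodule.mem_span_singleton_self x)
  have hfval : ∀ y : L₁, (f y : (N ⧸ modRad Rᵐᵒᵖ N) ⧸ L) = L.mkQ (y : N ⧸ modRad Rᵐᵒᵖ N) :=
    fun y => rfl
  have hfL : ∀ y : L₁, (y : N ⧸ modRad Rᵐᵒᵖ N) ∈ L → f y = 0 := by
    intro y hy
    apply Subtype.ext
    simpa [hfval y, Submodule.Quotient.mk_eq_zero] using hy
  have hfx : f ⟨x, hxL₁⟩ = ⟨c, hcC⟩ := Subtype.ext rfl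
  have hQσ : InSigma Rᵐᵒᵖ M (N ⧸ modRad Rᵐᵒᵖ N) := inSigma_quot hN _
  -- apply almost injectivity
  rcases hM C hCsimple (N ⧸ modRad Rᵐᵒᵖ N) hQσ L₁ f with ⟨g, hg⟩ | ⟨π, hπ, hπ0, h, hh⟩
  · -- Case 1 : extension exists, ker g is a coatom over K avoiding x
    have hgx : g x ≠ 0 := by
      have : g x = f ⟨x, hxL₁⟩ := hg ⟨x, hxL₁⟩
      rw [this, hfx]
      intro hzero
      exact hc0 (by simpa using congrArg (Subtype.val) hzero)
    have hKker : K ≤ LinearMap.ker g := by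
      intro y hy
      have hyL₁ : y ∈ L₁ := Submodule.mem_sup_left (hKL hy)
      have : g y = f ⟨y, hyL₁⟩ := hg ⟨y, hyL₁⟩
      simp only [LinearMap.mem_ker, this, hfL ⟨y, hyL₁⟩ (hKL hy)]
    have hkerco : IsCoatom (LinearMap.ker g) := by
      haveI := hCsimple
      have : LinearMap.ker g = Submodule.comap g ⊥ := by
        ext z; simp
      rw [this]
      refine isCoatom_comap g isCoatom_bot ?_
      rw [← this]
      intro htop
      exact hgx (by rw [← LinearMap.mem_ker, htop]; exact Submodule.mem_top)
    have : x ∈ LinearMap.ker g := Submodule.mem_sInf.mp hxS _ ⟨hkerco, hKker⟩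
    exact hgx this
  · -- Case 2
    by_cases hh0 : h = 0
    · -- π kills L₁; the image of range π in Q/L must contain c, contradiction
      have hL₁ker : L₁ ≤ LinearMap.ker π := by
        intro y hy
        have := hh ⟨y, hy⟩
        rw [hh0] at this
        simp only [LinearMap.zero_apply, Submodule.coe_zero] at this
        simpa [LinearMap.mem_ker] using this.symm
      set U₁ : Submodule Rᵐᵒᵖ ((N ⧸ modRad Rᵐᵒᵖ N) ⧸ L) :=
        (LinearMap.range π).map L.mkQ with hU₁def
      have hU₁ne : U₁ ≠ ⊥ := by
        obtain ⟨u, hu⟩ : ∃ u, π u ≠ 0 := by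
          by_contra hall
          push_neg at hall
          exact hπ0 (LinearMap.ext fun u => by simpa using hall u)
        intro hU₁bot
        have : L.mkQ (π u) ∈ U₁ := Submodule.mem_map_of_mem (LinearMap.mem_range_self π u)
        rw [hU₁bot] at this
        have hπuL : π u ∈ L := by
          simpa [Submodule.Quotient.mk_eq_zero] using this
        have : π (π u) = π u := by
          have := DFunLike.congr_fun hπ u
          simpa [Module.End.mul_apply] using this
        have hz : π (π u) = 0 := hL₁ker (Submodule.mem_sup_left hπuL)
        exact hu (by rw [← this, hz])
      have hcU₁ : c ∈ U₁ := hkey U₁ hU₁ne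
      obtain ⟨v, hv, hvc⟩ := hcU₁
      have hvx : v - x ∈ L := (Submodule.Quotient.eq _).mp hvc
      have hvker : v ∈ LinearMap.ker π := by
        have h1 : v - x ∈ LinearMap.ker π := hL₁ker (Submodule.mem_sup_left hvx)
        have h2 : x ∈ LinearMap.ker π := hL₁ker hxL₁
        simpa using (LinearMap.ker π).add_mem h1 h2
      have hvrange : π v = v := by
        obtain ⟨w, rfl⟩ := hv
        have := DFunLike.congr_fun hπ w
        simpa [Module.End.mul_apply] using this
      have hv0 : v = 0 := by rw [← hvrange]; exact hvker
      exact hc0 (by rw [← hvc, hv0, map_zero])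
    · -- h ≠ 0 : then ker π = L, so Q/L embeds into Q; contradiction with radicals
      have hinj : Function.Injective h := by
        haveI := hCsimple
        rcases eq_bot_or_eq_top (LinearMap.ker h) with hb | ht
        · exact LinearMap.ker_eq_bot.mp hb
        · exact absurd (LinearMap.ext fun s => by
            have : s ∈ LinearMap.ker h := ht ▸ Submodule.mem_top
            simpa using this) hh0
      have hLker : L ≤ LinearMap.ker π := by
        intro y hy
        have hyL₁ : y ∈ L₁ := Submodule.mem_sup_left hy
        have hπy := hh ⟨y, hyL₁⟩
        rw [hfL ⟨y, hyL₁⟩ hy] at hπy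
        simp only [map_zero, Submodule.coe_zero] at hπy
        simpa [LinearMap.mem_ker] using hπy.symm
      have hxker : x ∉ LinearMap.ker π := by
        intro hxk
        have hπx := hh ⟨x, hxL₁⟩
        rw [hfx] at hπx
        have hπx0 : π x = 0 := hxk
        rw [hπx0] at hπx
        have h0 : h ⟨c, hcC⟩ = 0 := by
          apply Subtype.ext; simpa using hπx
        have : (⟨c, hcC⟩ : C) = 0 := hinj (by rw [h0, map_zero])
        exact hc0 (by simpa using congrArg Subtype.val this)
      have hkerL : LinearMap.ker π = L :=
        le_antisymm (hLmax ⟨hKL.trans hLker, hxker⟩ hLker) hLker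
      set σ : ((N ⧸ modRad Rᵐᵒᵖ N) ⧸ L) →ₗ[Rᵐᵒᵖ] (N ⧸ modRad Rᵐᵒᵖ N) :=
        L.liftQ π (le_of_eq hkerL.symm) with hσdef
      have hσc : σ c = π x := by
        rw [hcdef, hσdef]
        exact Submodule.liftQ_apply _ _ _
      have hcrad : c ∈ modRad Rᵐᵒᵖ ((N ⧸ modRad Rᵐᵒᵖ N) ⧸ L) := by
        refine Submodule.mem_sInf.mpr fun P' hP' => ?_
        have hne : P'.comap L.mkQ ≠ ⊤ := by
          intro htop
          have : P' = ⊤ := by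
            rw [← Submodule.map_comap_eq_of_surjective L.mkQ_surjective P', htop,
              Submodule.map_top, Submodule.range_mkQ]
          exact hP'.1 this
        have hco : IsCoatom (P'.comap L.mkQ) := isCoatom_comap L.mkQ hP' hne
        have hKP : K ≤ P'.comap L.mkQ := by
          refine hKL.trans fun y hy => ?_
          have : L.mkQ y = 0 := by simpa [Submodule.Quotient.mk_eq_zero] using hy
          simp only [Submodule.mem_comap, this]
          exact P'.zero_mem
        exact Submodule.mem_sInf.mp hxS _ ⟨hco, hKP⟩
      have hrad0 : σ c ∈ modRad Rᵐᵒᵖ (N ⧸ modRad Rᵐᵒᵖ N) :=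
        map_modRad_le σ ⟨c, hcrad, rfl⟩
      rw [modRad_quot_modRad] at hrad0
      apply hxker
      rw [LinearMap.mem_ker, ← hσc]
      exact hrad0
end

section
/- Let R be a ring satisfying: (a) there exists a finite set {e_i}_{i∈I} of orthogonal idempotents of R such that each e_iR is a local injective right R-module of composition length two and J(R_R) = ⊕_{i∈I} J(e_iR); (b) R/J(R) is a right SV-ring and the Loewy length of R_R is at most 2; (c) R/SI(R_R) is a right artinian ring. Then every injective right R-module E containing a simple module S as an essential submodule satisfies: either E = S or E is a local projective module of composition length two. -/
universe u v w

/-- `SI(R_R)`: the sum of all simple injective submodules of the right regular module. -/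
def SIdeal (R : Type u) [Ring R] : Submodule Rᵐᵒᵖ R :=
  sSup {T : Submodule Rᵐᵒᵖ R | IsAtom T ∧ Module.Injective Rᵐᵒᵖ ↥T}

/-- Condition (a): there is a finite set of orthogonal idempotents `eᵢ` such that each
`eᵢR` is a local injective right module of length two and `J(R_R) = ⊕ J(eᵢR)`. -/
def HypA (R : Type u) [Ring R] : Prop :=
  ∃ (n : ℕ) (e : Fin n → R),
    (∀ i, IsIdempotentElem (e i)) ∧
    (∀ i j, i ≠ j → e i * e j = 0) ∧
    (∀ i, IsLocalModule Rᵐᵒᵖ ↥(Submodule.span Rᵐᵒᵖ ({e i} : Set R)) ∧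
      Module.Injective Rᵐᵒᵖ ↥(Submodule.span Rᵐᵒᵖ ({e i} : Set R)) ∧
      HasLengthTwo Rᵐᵒᵖ ↥(Submodule.span Rᵐᵒᵖ ({e i} : Set R))) ∧
    iSupIndep (fun i => Submodule.span Rᵐᵒᵖ ({e i} : Set R)) ∧
    modRad Rᵐᵒᵖ R =
      ⨆ i, (modRad Rᵐᵒᵖ ↥(Submodule.span Rᵐᵒᵖ ({e i} : Set R))).map
        (Submodule.span Rᵐᵒᵖ ({e i} : Set R)).subtype

/-- Condition (b): `R/J(R)` is a right `SV`-ring and the Loewy length of `R_R` is at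
most `2` (i.e. `R/Soc(R_R)` is semisimple). -/
def HypB (R : Type u) [Ring R] : Prop :=
  (∃ c : RingCon R, (∀ x : R, c x 0 ↔ x ∈ modRad Rᵐᵒᵖ R) ∧
      IsSemiartinianModule (RingCon.Quotient c)ᵐᵒᵖ (RingCon.Quotient c) ∧
      IsVModule (RingCon.Quotient c)ᵐᵒᵖ (RingCon.Quotient c)) ∧
  IsSemisimpleModule Rᵐᵒᵖ (R ⧸ modSocle Rᵐᵒᵖ R)

/-- Condition (c): `R/SI(R_R)` is a right artinian ring. -/
def HypC (R : Type u) [Ring R] : Prop :=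
  ∃ c : RingCon R, (∀ x : R, c x 0 ↔ x ∈ SIdeal R) ∧
    IsArtinian (RingCon.Quotient c)ᵐᵒᵖ (RingCon.Quotient c)

/-! Write `J = ⊕ Tᵢ` with `Tᵢ = J(eᵢR)` simple. If `S ≅ Tᵢ` for some `i`, then `S` embeds into
the injective module `eᵢR`; the embedding extends to `E`, injectively because `S` is essential, so
`E` is isomorphic to `Tᵢ` or to `eᵢR`, which is local, projective and of length two.
Otherwise no submodule of `J` maps nontrivially to `S`, so a map from a right ideal `I` to `S`
extends by zero over `I + J`. As `R/J` is a right V-ring, the kernel of that extension lies in a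
maximal right ideal `m` not containing `I + J`, and the map extends by zero over `m` to all of `R`.
By Baer's criterion `S` is injective, hence a direct summand of `E`, so `E = S`. -/

open Submodule

section Modules

variable {A : Type*} [Ring A] {M : Type*} [AddCommGroup M] [Module A M]

theorem IsLocalModule.le_of_isCoatom (h : IsLocalModule A M) {S₀ : Submodule A M}
    (hco : IsCoatom S₀) {K : Submodule A M} (hK : K ≠ ⊤) : K ≤ S₀ := by
  obtain ⟨P, hP, hle⟩ := h
  obtain rfl : P = S₀ := (hco.le_iff.mp (hle S₀ hco.1)).resolve_left hP
  exact hle K hK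

theorem IsLocalModule.eq_bot_or_eq_or_eq_top (h : IsLocalModule A M) {S₀ : Submodule A M}
    (hat : IsAtom S₀) (hco : IsCoatom S₀) (K : Submodule A M) : K = ⊥ ∨ K = S₀ ∨ K = ⊤ := by
  by_cases hK : K = ⊤
  · exact .inr (.inr hK)
  · exact (hat.le_iff.mp (h.le_of_isCoatom hco hK)).imp_right .inl

theorem IsLocalModule.modRad_eq (h : IsLocalModule A M) {S₀ : Submodule A M}
    (hco : IsCoatom S₀) : modRad A M = S₀ :=
  le_antisymm (sInf_le hco) <| le_sInf fun _ hC =>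
    ((hC.le_iff.mp (h.le_of_isCoatom hco hC.1)).resolve_left hco.1).le

theorem IsLocalModule.isSimpleModule_modRad (h : IsLocalModule A M) (hl : HasLengthTwo A M) :
    IsSimpleModule A (modRad A M) := by
  obtain ⟨S₀, hat, hco⟩ := hl
  rw [h.modRad_eq hco]
  exact isSimpleModule_iff_isAtom.mpr hat

theorem IsLocalModule.of_linearEquiv {N : Type*} [AddCommGroup N] [Module A N] (e : M ≃ₗ[A] N)
    (h : IsLocalModule A N) : IsLocalModule A M := by
  obtain ⟨P, hP, hle⟩ := h
  let o := orderIsoMapComap e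
  refine ⟨o.symm P, fun hP' => hP ?_, fun K hK => o.le_symm_apply.mpr (hle _ ?_)⟩
  · simpa using congrArg o hP'
  · exact fun hK' => hK (by simpa using congrArg o.symm hK')

theorem HasLengthTwo.of_linearEquiv {N : Type*} [AddCommGroup N] [Module A N] (e : M ≃ₗ[A] N)
    (h : HasLengthTwo A N) : HasLengthTwo A M := by
  obtain ⟨S₀, hat, hco⟩ := h
  let o := orderIsoMapComap e
  exact ⟨o.symm S₀, (o.symm.isAtom_iff S₀).mpr hat, (o.symm.isCoatom_iff S₀).mpr hco⟩

end Modules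

section Extensions

variable {A : Type*} [Ring A] {M : Type*} [AddCommGroup M] [Module A M]
  {Q : Type*} [AddCommGroup Q] [Module A Q]

theorem IsEssentialSubmodule.ker_eq_bot {N : Submodule A M} (hN : IsEssentialSubmodule A N)
    (g : M →ₗ[A] Q) (hg : Disjoint N (LinearMap.ker g)) : LinearMap.ker g = ⊥ :=
  by_contra fun h => hN _ h hg.eq_bot

theorem IsEssentialSubmodule.eq_top_of_retraction {N : Submodule A M}
    (hN : IsEssentialSubmodule A N) (r : M →ₗ[A] N) (hr : ∀ x : N, r x = x) : N = ⊤ := by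
  have hc := LinearMap.isCompl_of_proj hr
  rw [hN.ker_eq_bot r hc.disjoint] at hc
  exact eq_top_of_isCompl_bot hc

theorem exists_extend_sup_of_eq_zero (L K : Submodule A M) (f : L →ₗ[A] Q)
    (hf : ∀ x : L, (x : M) ∈ K → f x = 0) :
    ∃ F : ↥(L ⊔ K) →ₗ[A] Q, (∀ x : L, F (inclusion le_sup_left x) = f x) ∧
      ∀ x : K, F (inclusion le_sup_right x) = 0 := by
  let f' : M →ₗ.[A] Q := ⟨L, f⟩
  let z : M →ₗ.[A] Q := ⟨K, 0⟩
  have h : ∀ (x : f'.domain) (y : z.domain), (x : M) = y → f' x = z y :=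
    fun x y hxy => hf x (hxy ▸ y.2)
  exact ⟨(f'.sup z h).toFun, fun x => ((f'.left_le_sup z h).2 rfl).symm,
    fun y => ((f'.right_le_sup z h).2 rfl).symm⟩

theorem exists_extend_of_isCoatom [IsSimpleModule A Q] {L m : Submodule A M} (hm : IsCoatom m)
    (hLm : ¬ L ≤ m) (f : L →ₗ[A] Q) (hker : ∀ x : L, f x = 0 → (x : M) ∈ m) :
    ∃ g : M →ₗ[A] Q, ∀ x : L, g x = f x := by
  have hvan : ∀ x : L, (x : M) ∈ m → f x = 0 := by
    by_cases hf : f = 0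
    · simp [hf]
    have hW : m.comap L.subtype ≠ ⊤ := fun h => hLm fun x hx =>
      (h ▸ mem_top : (⟨x, hx⟩ : L) ∈ m.comap L.subtype)
    -- `ker f` is a maximal submodule of `L` lying in the proper submodule `L ⊓ m`
    have hkerW : LinearMap.ker f = m.comap L.subtype :=
      (((LinearMap.isCoatom_ker_of_surjective (LinearMap.surjective_of_ne_zero hf)).le_iff.mp
        fun x hx => hker x hx).resolve_left hW).symm
    exact fun x hx => (hkerW ▸ hx : x ∈ LinearMap.ker f)
  obtain ⟨F, hF, -⟩ := exists_extend_sup_of_eq_zero L m f hvan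
  have htop : L ⊔ m = ⊤ := hm.2 _ (right_lt_sup.mpr hLm)
  exact ⟨F ∘ₗ (LinearEquiv.ofTop _ htop).symm.toLinearMap, fun x => hF x⟩

theorem exists_linearEquiv_of_le_iSup [IsSimpleModule A Q] {ι : Type*} {T : ι → Submodule A M}
    [∀ i, IsSimpleModule A (T i)] {V : Submodule A M} (hV : V ≤ ⨆ i, T i) {f : V →ₗ[A] Q}
    (hf : f ≠ 0) : ∃ i, Nonempty (Q ≃ₗ[A] T i) := by
  have hJ := isSemisimpleModule_biSup_of_isSemisimpleModule_submodule (s := Set.univ) (p := T)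
    fun i _ => inferInstance
  rw [iSup_univ] at hJ
  have := IsSemisimpleModule.of_injective _ (inclusion_injective hV)
  obtain ⟨U, ⟨e⟩⟩ := LinearMap.linearEquiv_of_ne_zero hf
  have := IsSimpleModule.congr e.symm
  let e' := equivMapOfInjective _ V.injective_subtype U
  have := IsSimpleModule.congr e'.symm
  have : ∀ m : Set.range T, IsSimpleModule A m := by
    rintro ⟨_, i, rfl⟩
    infer_instance
  obtain ⟨_, ⟨i, rfl⟩, ⟨e''⟩⟩ := (U.map V.subtype).linearEquiv_of_le_sSup (Set.range T)
    (by rw [sSup_range]; exact (map_subtype_le V U).trans hV)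
  exact ⟨i, ⟨e.trans (e'.trans e'')⟩⟩

end Extensions

section VModules

variable {A : Type*} [Ring A] {M : Type*} [AddCommGroup M] [Module A M]
  {Q : Type*} [AddCommGroup Q] [Module A Q]

/-- `M ⧸ N` is a V-module, stated inside `M`: maximal submodules separate the points outside any
submodule containing `N`. -/
def IsVModuleAbove (N : Submodule A M) : Prop :=
  ∀ K : Submodule A M, N ≤ K → ∀ x ∉ K, ∃ m : Submodule A M, IsCoatom m ∧ K ≤ m ∧ x ∉ m

theorem IsVModule.exists_isCoatom (hV : IsVModule A M) {K : Submodule A M} {x : M} (hx : x ∉ K) :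
    ∃ m : Submodule A M, IsCoatom m ∧ K ≤ m ∧ x ∉ m := by
  obtain ⟨C, hC, rfl⟩ := hV K fun h => hx (h ▸ mem_top)
  obtain ⟨m, hmC, hxm⟩ : ∃ m ∈ C, x ∉ m := by simpa [mem_sInf] using hx
  exact ⟨m, hC m hmC, sInf_le hmC, hxm⟩

theorem IsVModuleAbove.ker_of_surjective {B : Type*} [Ring B] {N : Type*} [AddCommGroup N]
    [Module B N] {σ : A →+* B} [RingHomSurjective σ] {π : M →ₛₗ[σ] N}
    (hπ : Function.Surjective π) (hV : IsVModule B N) : IsVModuleAbove (LinearMap.ker π) := by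
  intro K hK x hx
  obtain ⟨m, hm, hKm, hxm⟩ := hV.exists_isCoatom (x := π x) (K := K.map π)
    fun h => hx (comap_map_eq_self hK ▸ h)
  exact ⟨m.comap π, (isCoatom_comap_iff hπ).mpr hm, map_le_iff_le_comap.mp hKm, hxm⟩

theorem IsVModuleAbove.of_ringCon {R : Type*} [Ring R] (c : RingCon R) {J : Submodule Rᵐᵒᵖ R}
    (hc : ∀ x, c x 0 ↔ x ∈ J) (hV : IsVModule c.Quotientᵐᵒᵖ c.Quotient) : IsVModuleAbove J := by
  let σ : Rᵐᵒᵖ →+* c.Quotientᵐᵒᵖ := RingHom.op c.mk'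
  have : RingHomSurjective σ := ⟨fun q =>
    let ⟨r, hr⟩ := c.mk'_surjective q.unop
    ⟨.op r, congrArg MulOpposite.op hr⟩⟩
  let π : R →ₛₗ[σ] c.Quotient :=
    { toFun := c.mk'
      map_add' := map_add c.mk'
      map_smul' := fun r x => map_mul c.mk' x r.unop }
  have hker : LinearMap.ker π = J := ext fun x => c.eq.trans (hc x)
  exact hker ▸ ker_of_surjective c.mk'_surjective hV

theorem IsVModuleAbove.exists_extend [IsSimpleModule A Q] {N : Submodule A M}
    (hV : IsVModuleAbove N) {L : Submodule A M} (hNL : N ≤ L) (f : L →ₗ[A] Q)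
    (hf : ∀ x : L, (x : M) ∈ N → f x = 0) : ∃ g : M →ₗ[A] Q, ∀ x : L, g x = f x := by
  by_cases h0 : f = 0
  · exact ⟨0, by simp [h0]⟩
  obtain ⟨x₀, hx₀⟩ := DFunLike.ne_iff.mp h0
  obtain ⟨m, hm, hKm, hx₀m⟩ := hV ((LinearMap.ker f).map L.subtype)
    (fun x hx => ⟨⟨x, hNL hx⟩, hf _ hx, rfl⟩) x₀
    fun ⟨y, hy, hyx⟩ => hx₀ (Subtype.ext hyx ▸ hy)
  exact exists_extend_of_isCoatom hm (fun h => hx₀m (h x₀.2)) f fun x hx => hKm ⟨x, hx, rfl⟩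

theorem IsVModuleAbove.relInjective [IsSimpleModule A Q] {N : Submodule A M}
    (hV : IsVModuleAbove N) {ι : Type*} {T : ι → Submodule A M} [∀ i, IsSimpleModule A (T i)]
    (hN : N ≤ ⨆ i, T i) (hQ : ∀ i, IsEmpty (Q ≃ₗ[A] T i)) : RelInjective A M Q := by
  intro L f
  have hf : ∀ x : L, (x : M) ∈ N → f x = 0 := by
    intro x hx
    by_contra hfx
    obtain ⟨i, ⟨e⟩⟩ := exists_linearEquiv_of_le_iSup (inf_le_right.trans hN)
      (f := f ∘ₗ inclusion (inf_le_left : L ⊓ N ≤ L)) (DFunLike.ne_iff.mpr ⟨⟨x, x.2, hx⟩, hfx⟩)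
    exact (hQ i).false e
  obtain ⟨F, hFf, hFN⟩ := exists_extend_sup_of_eq_zero L N f hf
  obtain ⟨g, hg⟩ := hV.exists_extend le_sup_right F fun x hx => hFN ⟨x, hx⟩
  exact ⟨g, fun x => (hg _).trans (hFf x)⟩

end VModules

section Injective

variable {A : Type*} [Ring A]

theorem Module.Baer.of_relInjective {M : Type*} [AddCommGroup M] [Module A M] {Q : Type*}
    [AddCommGroup Q] [Module A Q] (e : M ≃ₗ[A] A) (h : RelInjective A M Q) : Module.Baer A Q := by
  intro I f
  obtain ⟨g, hg⟩ :=
    h (Submodule.comap e.toLinearMap I) (f ∘ₗ e.toLinearMap.restrict fun _ hx => hx)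
  refine ⟨g ∘ₗ e.symm.toLinearMap, fun x hx => ?_⟩
  rw [LinearMap.comp_apply, LinearEquiv.coe_coe, hg ⟨e.symm x, by simpa using hx⟩]
  exact congrArg f (Subtype.ext (e.apply_symm_apply x))

theorem IsEssentialSubmodule.eq_top_or_nonempty_linearEquiv {P : Type w} [Small.{w} A]
    [AddCommGroup P] [Module A P] [Module.Injective A P] (hP : IsLocalModule A P)
    {S₀ : Submodule A P} (hat : IsAtom S₀) (hco : IsCoatom S₀)
    {E : Type*} [AddCommGroup E] [Module A E] {S : Submodule A E} (hess : IsEssentialSubmodule A S) (hS : S ≠ ⊥) (φ : S →ₗ[A] P)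
    (hφ : Function.Injective φ) : S = ⊤ ∨ Nonempty (E ≃ₗ[A] P) := by
  obtain ⟨g, hg⟩ := Module.Injective.extension_property A P S E S.subtype S.injective_subtype φ
  have hinj : Function.Injective g := by
    refine LinearMap.ker_eq_bot.mp (hess.ker_eq_bot g (disjoint_def.mpr fun x hx hgx => ?_))
    have : φ ⟨x, hx⟩ = φ 0 := by rw [← LinearMap.congr_fun hg, map_zero]; exact hgx
    exact congrArg Subtype.val (hφ this)
  have hrange : LinearMap.range g ≠ ⊥ := by
    obtain ⟨x, -, hx⟩ := (Submodule.ne_bot_iff S).mp hS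
    exact fun h => hx (hinj (by simpa [h] using LinearMap.mem_range_self g x))
  rcases hP.eq_bot_or_eq_or_eq_top hat hco (LinearMap.range g) with h | h | h
  · exact absurd h hrange
  · have : IsSimpleModule A (LinearMap.range g) := h ▸ isSimpleModule_iff_isAtom.mpr hat
    have := IsSimpleModule.congr (LinearEquiv.ofInjective g hinj)
    exact .inl ((eq_bot_or_eq_top S).resolve_left hS)
  · exact .inr ⟨LinearEquiv.ofBijective g ⟨hinj, LinearMap.range_eq_top.mp h⟩⟩

end Injective

section RightIdeals

variable (R : Type*) [Ring R]

def MulOpposite.opSelfLinearEquiv : R ≃ₗ[Rᵐᵒᵖ] Rᵐᵒᵖ where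
  toFun := MulOpposite.op
  invFun := MulOpposite.unop
  map_add' _ _ := rfl
  map_smul' _ _ := rfl
  left_inv _ := rfl
  right_inv _ := rfl

instance : Module.Projective Rᵐᵒᵖ R :=
  .of_equiv (MulOpposite.opSelfLinearEquiv R).symm

variable {R}

theorem Module.Projective.span_singleton_of_isIdempotentElem {e : R} (he : IsIdempotentElem e) :
    Module.Projective Rᵐᵒᵖ (span Rᵐᵒᵖ {e}) := by
  let s : R →ₗ[Rᵐᵒᵖ] span Rᵐᵒᵖ {e} :=
    { toFun x := ⟨e * x, mem_span_singleton.mpr ⟨.op x, op_smul_eq_mul ..⟩⟩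
      map_add' x y := Subtype.ext (mul_add e x y)
      map_smul' r x := Subtype.ext (by simp [MulOpposite.smul_eq_mul_unop, mul_assoc]) }
  refine .of_split (span Rᵐᵒᵖ {e}).subtype s (LinearMap.ext fun ⟨x, hx⟩ => Subtype.ext ?_)
  obtain ⟨r, rfl⟩ := mem_span_singleton.mp hx
  change e * (r • e) = r • e
  rw [MulOpposite.smul_eq_mul_unop, ← mul_assoc, he.eq]

end RightIdeals

theorem lemma31_injective_hull_general (R : Type u) [Ring R]
    (hA : HypA R) (hB : HypB R)
    (E : Type v) [AddCommGroup E] [Module Rᵐᵒᵖ E]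
    (S : Submodule Rᵐᵒᵖ E) (hS : IsSimpleModule Rᵐᵒᵖ ↥S)
    (hess : IsEssentialSubmodule Rᵐᵒᵖ S) :
    S = ⊤ ∨
      (IsLocalModule Rᵐᵒᵖ E ∧ Module.Projective Rᵐᵒᵖ E ∧ HasLengthTwo Rᵐᵒᵖ E) := by
  obtain ⟨n, e, hidem, -, hP, -, hJ⟩ := hA
  obtain ⟨⟨c, hc, -, hV⟩, -⟩ := hB
  let P i := span Rᵐᵒᵖ {e i}
  let T i := (modRad Rᵐᵒᵖ (P i)).map (P i).subtype
  have hT i : IsSimpleModule Rᵐᵒᵖ (T i) :=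
    have := (hP i).1.isSimpleModule_modRad (hP i).2.2
    .congr (equivMapOfInjective _ (P i).injective_subtype _).symm
  by_cases hcase : ∃ i, Nonempty (S ≃ₗ[Rᵐᵒᵖ] T i)
  · obtain ⟨i, ⟨φ⟩⟩ := hcase
    obtain ⟨hloc, hinj, S₀, hat, hco⟩ := hP i
    let ι : S →ₗ[Rᵐᵒᵖ] P i := (modRad Rᵐᵒᵖ (P i)).subtype ∘ₗ
      (equivMapOfInjective _ (P i).injective_subtype _).symm.toLinearMap ∘ₗ φ.toLinearMap
    have hι : Function.Injective ι := by
      simp only [ι, LinearMap.coe_comp, LinearEquiv.coe_coe]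
      exact (injective_subtype _).comp ((LinearEquiv.injective _).comp φ.injective)
    rcases hess.eq_top_or_nonempty_linearEquiv hloc hat hco
      (isSimpleModule_iff_isAtom.mp hS).1 ι hι with h | ⟨⟨ψ⟩⟩
    · exact .inl h
    · exact .inr ⟨hloc.of_linearEquiv ψ,
        (Module.Projective.span_singleton_of_isIdempotentElem (hidem i)).of_equiv ψ.symm,
        HasLengthTwo.of_linearEquiv ψ ⟨S₀, hat, hco⟩⟩
  · have hrel : RelInjective Rᵐᵒᵖ R S := (IsVModuleAbove.of_ringCon c hc hV).relInjective hJ.le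
      fun i => not_nonempty_iff.mp fun h => hcase ⟨i, h⟩
    have hbaer := Module.Baer.of_relInjective (MulOpposite.opSelfLinearEquiv R) hrel
    obtain ⟨r, hr⟩ := hbaer.extension_property S.subtype S.injective_subtype LinearMap.id
    exact .inl (hess.eq_top_of_retraction r (LinearMap.congr_fun hr))

/-- Lemma 3.1 (1): under conditions (a), (b), (c) the injective hull of every simple right
module is either simple or a local projective module of length two. -/
theorem lemma31_injective_hull (R : Type u) [Ring R]
    (hA : HypA R) (hB : HypB R) (hC : HypC R)
    (E : Type v) [AddCommGroup E] [Module Rᵐᵒᵖ E] (hE : Module.Injective Rᵐᵒᵖ E)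
    (S : Submodule Rᵐᵒᵖ E) (hS : IsSimpleModule Rᵐᵒᵖ ↥S)
    (hess : IsEssentialSubmodule Rᵐᵒᵖ S) :
    S = ⊤ ∨
      (IsLocalModule Rᵐᵒᵖ E ∧ Module.Projective Rᵐᵒᵖ E ∧ HasLengthTwo Rᵐᵒᵖ E) :=
  lemma31_injective_hull_general R hA hB E S hS hess
end
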